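/- Let Q be the quiver with vertices {1,2,3}, n+1 arrows from 2 to 3, and k arrows from 2 to 1. For x ∈ 𝕂^{n+1} \ {0}, let U_x be the Q-representation with (U_x)₁ = 0, (U_x)₂ = 𝕂, (U_x)₃ = 𝕂, the j-th arrow 2→3 acting by multiplication by x_j, and the arrows 2→1 acting as zero. Let W be the Q-representation with W₁ = 𝕂, W₂ = 𝕂^{M_{n,d}}, W₃ = 𝕂^{M_{n,d-1}}, arrows 2→3 acting by the maps g_j, and the i-th arrow 2→1 acting by the linear map ψ_i with ψ_i(v_m) = b_m^{(i)}, where h_i = Σ b_m^{(i)} T^m are homogeneous degree-d polynomials. Then Hom_Q(U_x, W) = 0 if and only if h_j(x) ≠ 0 for some 1 ≤ j ≤ k. -/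
import Mathlib

section Aux

variable {𝕂 : Type*} [Field 𝕂] {n : ℕ}

lemma uxw_mem_A {e : ℕ} {m : Fin (n+1) → ℕ} :
    m ∈ Finset.Nat.antidiagonalTuple (n+1) e ↔ ∑ j, m j = e :=
  Finset.Nat.mem_antidiagonalTuple

lemma uxw_lin_apply_eq_sum {ι : Type*} [Fintype ι] [DecidableEq ι] {M : Type*}
    [AddCommMonoid M] [Module 𝕂 M] (f : (ι → 𝕂) →ₗ[𝕂] M) (v : ι → 𝕂) :
    f v = ∑ i, v i • f (Pi.single i 1) := by
  conv_lhs => rw [← Finset.univ_sum_single v, map_sum]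
  refine Finset.sum_congr rfl fun i _ => ?_
  rw [← map_smul]
  congr 1
  rw [← Pi.single_smul, smul_eq_mul, mul_one]

lemma uxw_sum_single (j : Fin (n+1)) (c : ℕ) : ∑ t, (Pi.single j c : Fin (n+1) → ℕ) t = c := by
  rw [Finset.sum_eq_single j (fun b _ hb => by simp [Pi.single_eq_of_ne hb]) (by simp)]
  simp

lemma uxw_prod_add (x : Fin (n+1) → 𝕂) (a b : Fin (n+1) → ℕ) :
    ∏ t, x t ^ (a t + b t) = (∏ t, x t ^ a t) * ∏ t, x t ^ b t := by
  rw [← Finset.prod_mul_distrib]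
  exact Finset.prod_congr rfl fun t _ => pow_add _ _ _

lemma uxw_prod_single (x : Fin (n+1) → 𝕂) (j : Fin (n+1)) (c : ℕ) :
    ∏ t, x t ^ (Pi.single j c : Fin (n+1) → ℕ) t = x j ^ c := by
  rw [Finset.prod_eq_single j (fun b _ hb => by rw [Pi.single_eq_of_ne hb, pow_zero]) (by simp)]
  simp

lemma uxw_eval_eq {d : ℕ} (x : Fin (n+1) → 𝕂) (p : MvPolynomial (Fin (n+1)) 𝕂)
    (hp : p.IsHomogeneous d) :
    MvPolynomial.eval x p
      = ∑ m : ↥(Finset.Nat.antidiagonalTuple (n+1) d),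
          MvPolynomial.coeff (Finsupp.equivFunOnFinite.symm (m : Fin (n+1) → ℕ)) p
            * ∏ t, x t ^ (m : Fin (n+1) → ℕ) t := by
  classical
  rw [Finset.sum_coe_sort (Finset.Nat.antidiagonalTuple (n+1) d)
    (fun m => MvPolynomial.coeff (Finsupp.equivFunOnFinite.symm m) p * ∏ t, x t ^ m t)]
  rw [MvPolynomial.eval_eq']
  rw [Finset.sum_congr rfl (fun m _ => by congr 1 :
      ∀ m ∈ Finset.Nat.antidiagonalTuple (n+1) d,
        MvPolynomial.coeff (Finsupp.equivFunOnFinite.symm m) p * ∏ t, x t ^ m t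
          = MvPolynomial.coeff (Finsupp.equivFunOnFinite.symm m) p
              * ∏ t, x t ^ (Finsupp.equivFunOnFinite.symm m) t)]
  rw [← Finset.sum_image (f := fun μ : Fin (n+1) →₀ ℕ => MvPolynomial.coeff μ p * ∏ t, x t ^ μ t)
    (g := fun m : Fin (n+1) → ℕ => Finsupp.equivFunOnFinite.symm m)
    (fun a _ b _ hab => Finsupp.equivFunOnFinite.symm.injective hab)]
  refine Finset.sum_subset ?_ ?_
  · intro μ hμ
    have h2 : μ.degree = d := by
      by_contra hc
      exact MvPolynomial.mem_support_iff.mp hμ (hp.coeff_eq_zero hc)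
    refine Finset.mem_image.mpr ⟨⇑μ, ?_, Finsupp.equivFunOnFinite_symm_coe μ⟩
    rw [uxw_mem_A, ← h2, Finsupp.degree_eq_weight_one]
    simp [Finsupp.weight_apply, Finsupp.sum_fintype]
  · intro μ _ hμ
    rw [MvPolynomial.notMem_support_iff.mp hμ, zero_mul]

end Aux

section Aux2

variable {𝕂 : Type*} [Field 𝕂] {n : ℕ}

lemma uxw_mem_add {d : ℕ} (hd : 1 ≤ d)
    (m' : ↥(Finset.Nat.antidiagonalTuple (n+1) (d-1))) (j : Fin (n+1)) :
    m'.1 + Pi.single j 1 ∈ Finset.Nat.antidiagonalTuple (n+1) d := by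
  have h1 := uxw_mem_A.mp m'.2
  rw [uxw_mem_A]
  simp only [Pi.add_apply]
  rw [Finset.sum_add_distrib, h1, uxw_sum_single]
  omega

lemma uxw_sub {d : ℕ} (hd : 1 ≤ d) (m : ↥(Finset.Nat.antidiagonalTuple (n+1) d))
    (j : Fin (n+1)) (hj : 0 < m.1 j) :
    (m.1 - (Pi.single j 1 : Fin (n+1) → ℕ)) + Pi.single j 1 = m.1
      ∧ (m.1 - (Pi.single j 1 : Fin (n+1) → ℕ)) ∈ Finset.Nat.antidiagonalTuple (n+1) (d-1) := by
  have hadd : (m.1 - (Pi.single j 1 : Fin (n+1) → ℕ)) + Pi.single j 1 = m.1 := by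
    funext t
    rcases eq_or_ne t j with rfl | h1
    · simp only [Pi.add_apply, Pi.sub_apply, Pi.single_eq_same]
      omega
    · simp only [Pi.add_apply, Pi.sub_apply, Pi.single_eq_of_ne h1]
      omega
  refine ⟨hadd, ?_⟩
  rw [uxw_mem_A]
  have h1 : ∑ t, ((m.1 - (Pi.single j 1 : Fin (n+1) → ℕ)) t + (Pi.single j 1 : Fin (n+1) → ℕ) t) = ∑ t, m.1 t :=
    Finset.sum_congr rfl fun t _ => by
      have h2 := congrFun hadd t
      simpa using h2
  rw [Finset.sum_add_distrib, uxw_sum_single, uxw_mem_A.mp m.2] at h1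
  omega

lemma uxw_cross {d : ℕ} (hd : 1 ≤ d) (x : Fin (n+1) → 𝕂)
    (u : ↥(Finset.Nat.antidiagonalTuple (n+1) d) → 𝕂)
    (w : ↥(Finset.Nat.antidiagonalTuple (n+1) (d-1)) → 𝕂)
    (hrel : ∀ (j : Fin (n+1)) (m' : ↥(Finset.Nat.antidiagonalTuple (n+1) (d-1))),
      u ⟨m'.1 + Pi.single j 1, uxw_mem_add hd m' j⟩ = x j * w m') :
    ∀ (N : ℕ) (m' m'' : ↥(Finset.Nat.antidiagonalTuple (n+1) (d-1))),
      (∑ t, ((m'.1 t - m''.1 t) + (m''.1 t - m'.1 t))) ≤ N →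
      (∏ t, x t ^ m'.1 t) ≠ 0 → (∏ t, x t ^ m''.1 t) ≠ 0 →
      (∏ t, x t ^ m''.1 t) * w m' = (∏ t, x t ^ m'.1 t) * w m'' := by
  intro N
  induction N with
  | zero =>
    intro m' m'' hdist _ _
    have h0 : m' = m'' := by
      refine Subtype.ext (funext fun t => ?_)
      have := Finset.sum_eq_zero_iff.mp (Nat.le_zero.mp hdist) t (Finset.mem_univ t)
      omega
    rw [h0, mul_comm]
  | succ N ih =>
    intro m' m'' hdist hP' hP''
    by_cases heq : m'.1 = m''.1
    · rw [Subtype.ext heq, mul_comm]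
    · have hsum' : ∑ t, m'.1 t = d - 1 := uxw_mem_A.mp m'.2
      have hsum'' : ∑ t, m''.1 t = d - 1 := uxw_mem_A.mp m''.2
      obtain ⟨j, hj⟩ : ∃ j, m''.1 j < m'.1 j := by
        by_contra hc
        push_neg at hc
        exact heq (funext fun t =>
          (Finset.sum_eq_sum_iff_of_le (fun i _ => hc i)).mp
            (hsum'.trans hsum''.symm) t (Finset.mem_univ t))
      obtain ⟨j', hj'⟩ : ∃ j', m'.1 j' < m''.1 j' := by
        by_contra hc
        push_neg at hc
        exact heq (funext fun t =>
          ((Finset.sum_eq_sum_iff_of_le (fun i _ => hc i)).mp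
            (hsum''.trans hsum'.symm) t (Finset.mem_univ t)).symm)
      have hne : j ≠ j' := fun e => by rw [e] at hj; omega
      set m3 : Fin (n+1) → ℕ :=
        fun t => m'.1 t + (Pi.single j' 1 : Fin (n+1) → ℕ) t - (Pi.single j 1 : Fin (n+1) → ℕ) t with hm3
      have hkey : m3 + Pi.single j 1 = m'.1 + Pi.single j' 1 := by
        funext t
        rcases eq_or_ne t j with rfl | h1
        · simp only [hm3, Pi.add_apply, Pi.single_eq_same, Pi.single_eq_of_ne hne]
          omega
        · rcases eq_or_ne t j' with rfl | h2
          · simp only [hm3, Pi.add_apply, Pi.single_eq_same, Pi.single_eq_of_ne h1]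
            omega
          · simp only [hm3, Pi.add_apply, Pi.single_eq_of_ne h1, Pi.single_eq_of_ne h2]
            omega
      have hm3mem : m3 ∈ Finset.Nat.antidiagonalTuple (n+1) (d-1) := by
        rw [uxw_mem_A]
        have h1 : ∑ t, (m3 t + (Pi.single j 1 : Fin (n+1) → ℕ) t)
            = ∑ t, (m'.1 t + (Pi.single j' 1 : Fin (n+1) → ℕ) t) :=
          Finset.sum_congr rfl fun t _ => by
            have h2 := congrFun hkey t
            simpa using h2
        rw [Finset.sum_add_distrib, Finset.sum_add_distrib, uxw_sum_single, uxw_sum_single,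
          hsum'] at h1
        omega
      have hm3j : m3 j = m'.1 j - 1 := by
        simp only [hm3, Pi.single_eq_same, Pi.single_eq_of_ne hne]
        omega
      have hm3j' : m3 j' = m'.1 j' + 1 := by
        simp only [hm3, Pi.single_eq_same, Pi.single_eq_of_ne (Ne.symm hne)]
        omega
      have hxj : x j ≠ 0 :=
        (pow_ne_zero_iff (by omega : m'.1 j ≠ 0)).mp
          (Finset.prod_ne_zero_iff.mp hP' j (Finset.mem_univ j))
      have hxj' : x j' ≠ 0 :=
        (pow_ne_zero_iff (by omega : m''.1 j' ≠ 0)).mp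
          (Finset.prod_ne_zero_iff.mp hP'' j' (Finset.mem_univ j'))
      have he : x j * w ⟨m3, hm3mem⟩ = x j' * w m' := by
        rw [← hrel j ⟨m3, hm3mem⟩, ← hrel j' m']
        exact congrArg u (Subtype.ext hkey)
      have hPm3 : (∏ t, x t ^ m3 t) * x j = (∏ t, x t ^ m'.1 t) * x j' := by
        have h1 : ∏ t, x t ^ (m3 t + (Pi.single j 1 : Fin (n+1) → ℕ) t)
            = ∏ t, x t ^ (m'.1 t + (Pi.single j' 1 : Fin (n+1) → ℕ) t) :=
          Finset.prod_congr rfl fun t _ => by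
            have h2 := congrFun hkey t
            simp only [Pi.add_apply] at h2
            rw [h2]
        rw [uxw_prod_add, uxw_prod_add, uxw_prod_single, uxw_prod_single, pow_one, pow_one] at h1
        exact h1
      have hPm3ne : (∏ t, x t ^ m3 t) ≠ 0 := by
        intro h0
        rw [h0, zero_mul] at hPm3
        exact (mul_ne_zero hP' hxj') hPm3.symm
      have hpt : ∀ t, (m3 t - m''.1 t) + (m''.1 t - m3 t) + (Pi.single j 1 : Fin (n+1) → ℕ) t
            + (Pi.single j' 1 : Fin (n+1) → ℕ) t
          = (m'.1 t - m''.1 t) + (m''.1 t - m'.1 t) := by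
        intro t
        rcases eq_or_ne t j with rfl | h1
        · rw [hm3j, Pi.single_eq_same, Pi.single_eq_of_ne hne]
          omega
        · rcases eq_or_ne t j' with rfl | h2
          · rw [hm3j', Pi.single_eq_same, Pi.single_eq_of_ne h1]
            omega
          · have h3 : m3 t = m'.1 t := by
              simp only [hm3, Pi.single_eq_of_ne h1, Pi.single_eq_of_ne h2]
              omega
            rw [h3, Pi.single_eq_of_ne h1, Pi.single_eq_of_ne h2]
            omega
      have hsum3 : ∑ t, ((m3 t - m''.1 t) + (m''.1 t - m3 t)) ≤ N := by
        have h1 : ∑ t, ((m3 t - m''.1 t) + (m''.1 t - m3 t) + (Pi.single j 1 : Fin (n+1) → ℕ) t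
            + (Pi.single j' 1 : Fin (n+1) → ℕ) t) = ∑ t, ((m'.1 t - m''.1 t) + (m''.1 t - m'.1 t)) :=
          Finset.sum_congr rfl fun t _ => hpt t
        rw [Finset.sum_add_distrib, Finset.sum_add_distrib, uxw_sum_single, uxw_sum_single] at h1
        omega
      have hih := ih ⟨m3, hm3mem⟩ m'' hsum3 hPm3ne hP''
      refine mul_left_cancel₀ hxj' ?_
      linear_combination (-(∏ t, x t ^ m''.1 t)) * he + x j * hih + w m'' * hPm3

end Aux2


/-- Let `Q` be the quiver with vertices `{1,2,3}`, `n+1` arrows `2 → 3` and `k` arrows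
`2 → 1`.  For `x ≠ 0`, `U_x` is the representation `0 ← 𝕂 ⇉ 𝕂` with the `j`-th arrow
`2 → 3` acting by `x_j` and the arrows `2 → 1` acting by zero; `W` has
`W₁ = 𝕂`, `W₂ = 𝕂^{M_{n,d}}`, `W₃ = 𝕂^{M_{n,d-1}}`, arrows `2 → 3` acting by the
shift maps `g_j` (with `g_j(v_m) = v_{m-e_j}` if `m_j > 0`, else `0`) and the `i`-th
arrow `2 → 1` acting by the linear form `ψ_i` with `ψ_i(v_m) = b_m^{(i)}`, where
`h_i = Σ_m b_m^{(i)} T^m` is homogeneous of degree `d`.  A morphism `U_x → W` is a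
pair `(φ₂, φ₃)` with `g_j ∘ φ₂ = x_j • φ₃` for all `j` and `ψ_i ∘ φ₂ = 0` for all `i`.
Then `Hom_Q(U_x, W) = 0` if and only if `h_i(x) ≠ 0` for some `i`. -/
theorem hom_Ux_W_eq_zero_iff (𝕂 : Type*) [Field 𝕂] [IsAlgClosed 𝕂]
    (n d k : ℕ) (hd : 1 ≤ d) (x : Fin (n + 1) → 𝕂) (hx : x ≠ 0)
    (h : Fin k → MvPolynomial (Fin (n + 1)) 𝕂) (hhom : ∀ i, (h i).IsHomogeneous d)
    (G : Fin (n + 1) → ((↥(Finset.Nat.antidiagonalTuple (n + 1) d) → 𝕂) →ₗ[𝕂]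
      (↥(Finset.Nat.antidiagonalTuple (n + 1) (d - 1)) → 𝕂)))
    (hG : ∀ (j : Fin (n + 1)) (m : ↥(Finset.Nat.antidiagonalTuple (n + 1) d)),
      G j (Pi.single m 1) = fun m' =>
        if m'.1 + Pi.single j 1 = m.1 then (1 : 𝕂) else 0)
    (ψ : Fin k → ((↥(Finset.Nat.antidiagonalTuple (n + 1) d) → 𝕂) →ₗ[𝕂] 𝕂))
    (hψ : ∀ (i : Fin k) (m : ↥(Finset.Nat.antidiagonalTuple (n + 1) d)),
      ψ i (Pi.single m 1) =
        MvPolynomial.coeff (Finsupp.equivFunOnFinite.symm (m : Fin (n + 1) → ℕ)) (h i)) :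
    (∀ (φ₂ : 𝕂 →ₗ[𝕂] (↥(Finset.Nat.antidiagonalTuple (n + 1) d) → 𝕂))
        (φ₃ : 𝕂 →ₗ[𝕂] (↥(Finset.Nat.antidiagonalTuple (n + 1) (d - 1)) → 𝕂)),
        (∀ j, (G j).comp φ₂ = x j • φ₃) → (∀ i, (ψ i).comp φ₂ = 0) →
          φ₂ = 0 ∧ φ₃ = 0) ↔
      ∃ i, MvPolynomial.eval x (h i) ≠ 0 := by
  obtain ⟨j₀, hj₀⟩ : ∃ j, x j ≠ 0 := by
    by_contra hc
    push_neg at hc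
    exact hx (funext hc)
  have hGapp : ∀ (u : ↥(Finset.Nat.antidiagonalTuple (n + 1) d) → 𝕂) (j : Fin (n + 1))
      (m' : ↥(Finset.Nat.antidiagonalTuple (n + 1) (d - 1))),
      G j u m' = u ⟨m'.1 + Pi.single j 1, uxw_mem_add hd m' j⟩ := by
    intro u j m'
    rw [uxw_lin_apply_eq_sum (G j) u]
    simp only [Finset.sum_apply, Pi.smul_apply, hG, smul_eq_mul]
    refine (Finset.sum_eq_single
      (⟨m'.1 + Pi.single j 1, uxw_mem_add hd m' j⟩ :
        ↥(Finset.Nat.antidiagonalTuple (n + 1) d)) ?_ ?_).trans ?_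
    · intro b _ hb
      rw [if_neg, mul_zero]
      exact fun hc => hb (Subtype.ext hc.symm)
    · intro habs
      exact absurd (Finset.mem_univ _) habs
    · rw [if_pos rfl, mul_one]
  have hψapp : ∀ (u : ↥(Finset.Nat.antidiagonalTuple (n + 1) d) → 𝕂) (i : Fin k),
      ψ i u = ∑ m, u m *
        MvPolynomial.coeff (Finsupp.equivFunOnFinite.symm (m : Fin (n + 1) → ℕ)) (h i) := by
    intro u i
    rw [uxw_lin_apply_eq_sum (ψ i) u]
    exact Finset.sum_congr rfl fun m _ => by rw [hψ, smul_eq_mul]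
  constructor
  · -- Hom = 0 → some h i(x) ≠ 0
    intro H
    by_contra hne
    push_neg at hne
    set u : ↥(Finset.Nat.antidiagonalTuple (n + 1) d) → 𝕂 :=
      fun m => ∏ t, x t ^ m.1 t with hu
    set w : ↥(Finset.Nat.antidiagonalTuple (n + 1) (d - 1)) → 𝕂 :=
      fun m => ∏ t, x t ^ m.1 t with hw
    have hG' : ∀ j, (G j).comp (LinearMap.toSpanSingleton 𝕂 _ u)
        = x j • LinearMap.toSpanSingleton 𝕂 _ w := by
      intro j
      have hGju : G j u = x j • w := by
        funext m'
        rw [Pi.smul_apply, hGapp u j m', smul_eq_mul]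
        simp only [hu, hw]
        show ∏ t, x t ^ (m'.1 t + (Pi.single j 1 : Fin (n+1) → ℕ) t) = _
        rw [uxw_prod_add, uxw_prod_single, pow_one, mul_comm]
      refine LinearMap.ext fun c => ?_
      show G j ((LinearMap.toSpanSingleton 𝕂 _ u) c)
        = (x j • LinearMap.toSpanSingleton 𝕂 _ w) c
      rw [LinearMap.smul_apply, LinearMap.toSpanSingleton_apply,
        LinearMap.toSpanSingleton_apply, map_smul, hGju, smul_comm]
    have hψ' : ∀ i, (ψ i).comp (LinearMap.toSpanSingleton 𝕂 _ u) = 0 := by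
      intro i
      have hpsiu : ψ i u = 0 := by
        rw [hψapp]
        have he := (uxw_eval_eq x (h i) (hhom i)).symm.trans (hne i)
        rw [← he]
        refine Finset.sum_congr rfl fun m _ => ?_
        simp only [hu]
        ring
      refine LinearMap.ext fun c => ?_
      show ψ i ((LinearMap.toSpanSingleton 𝕂 _ u) c) = 0
      rw [LinearMap.toSpanSingleton_apply, map_smul, hpsiu, smul_zero]
    obtain ⟨hφ₂0, -⟩ := H (LinearMap.toSpanSingleton 𝕂 _ u)
      (LinearMap.toSpanSingleton 𝕂 _ w) hG' hψ'
    have hu0 : u = 0 := by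
      have := congrArg (fun φ => φ 1) hφ₂0
      simpa [LinearMap.toSpanSingleton_apply] using this
    have hm0 : Pi.single j₀ d ∈ Finset.Nat.antidiagonalTuple (n + 1) d := by
      rw [uxw_mem_A]
      exact uxw_sum_single j₀ d
    have h1 := congrFun hu0 ⟨Pi.single j₀ d, hm0⟩
    simp only [hu, Pi.zero_apply] at h1
    rw [uxw_prod_single] at h1
    exact pow_ne_zero d hj₀ h1
  · -- some h i(x) ≠ 0 → Hom = 0
    rintro ⟨i₀, hi₀⟩ φ₂ φ₃ hGrel hψrel
    set u := φ₂ 1 with hu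
    set w := φ₃ 1 with hw
    have hrel : ∀ (j : Fin (n + 1)) (m' : ↥(Finset.Nat.antidiagonalTuple (n + 1) (d - 1))),
        u ⟨m'.1 + Pi.single j 1, uxw_mem_add hd m' j⟩ = x j * w m' := by
      intro j m'
      have h1 := congrFun (congrArg (fun φ => φ 1) (hGrel j)) m'
      simp only [LinearMap.comp_apply, LinearMap.smul_apply, Pi.smul_apply, smul_eq_mul] at h1
      rw [← hu, ← hw] at h1
      rw [← hGapp u j m']
      exact h1
    have cross := uxw_cross hd x u w hrel
    have hm0 : Pi.single j₀ (d - 1) ∈ Finset.Nat.antidiagonalTuple (n + 1) (d - 1) := by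
      rw [uxw_mem_A]
      exact uxw_sum_single j₀ (d - 1)
    set M0 : ↥(Finset.Nat.antidiagonalTuple (n + 1) (d - 1)) :=
      ⟨Pi.single j₀ (d - 1), hm0⟩ with hM0
    have hPM0 : (∏ t, x t ^ M0.1 t) ≠ 0 := by
      rw [hM0]
      show (∏ t, x t ^ (Pi.single j₀ (d - 1) : Fin (n+1) → ℕ) t) ≠ 0
      rw [uxw_prod_single]
      exact pow_ne_zero _ hj₀
    have hum : ∀ m : ↥(Finset.Nat.antidiagonalTuple (n + 1) d),
        u m = (w M0 / ∏ t, x t ^ M0.1 t) * ∏ t, x t ^ m.1 t := by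
      intro m
      by_cases hz : ∃ j, 0 < m.1 j ∧ x j = 0
      · obtain ⟨j, hjm, hjx⟩ := hz
        have hs := uxw_sub hd m j hjm
        have hPm : (∏ t, x t ^ m.1 t) = 0 :=
          Finset.prod_eq_zero (Finset.mem_univ j) (by rw [hjx]; exact zero_pow (by omega))
        have h1 := hrel j ⟨m.1 - Pi.single j 1, hs.2⟩
        rw [show (⟨(⟨m.1 - Pi.single j 1, hs.2⟩ :
            ↥(Finset.Nat.antidiagonalTuple (n + 1) (d - 1))).1 + Pi.single j 1,
            uxw_mem_add hd _ j⟩ : ↥(Finset.Nat.antidiagonalTuple (n + 1) d)) = m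
          from Subtype.ext hs.1] at h1
        rw [h1, hjx, zero_mul, hPm, mul_zero]
      · push_neg at hz
        have hPm : (∏ t, x t ^ m.1 t) ≠ 0 := by
          rw [Finset.prod_ne_zero_iff]
          intro t _
          rcases Nat.eq_zero_or_pos (m.1 t) with h0 | h0
          · rw [h0, pow_zero]; exact one_ne_zero
          · exact pow_ne_zero _ (hz t h0)
        obtain ⟨j, hjm⟩ : ∃ j, 0 < m.1 j := by
          by_contra hc
          push_neg at hc
          have h0 : ∑ t, m.1 t = 0 := Finset.sum_eq_zero fun t _ => Nat.le_zero.mp (hc t)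
          have h1 := uxw_mem_A.mp m.2
          omega
        have hs := uxw_sub hd m j hjm
        set M' : ↥(Finset.Nat.antidiagonalTuple (n + 1) (d - 1)) :=
          ⟨m.1 - Pi.single j 1, hs.2⟩ with hM'
        have h1 : u m = x j * w M' := by
          have h2 := hrel j M'
          rwa [show (⟨M'.1 + Pi.single j 1, uxw_mem_add hd M' j⟩ :
            ↥(Finset.Nat.antidiagonalTuple (n + 1) d)) = m from Subtype.ext hs.1] at h2
        have hPM' : (∏ t, x t ^ M'.1 t) * x j = ∏ t, x t ^ m.1 t := by
          have h2 : ∏ t, x t ^ (M'.1 t + (Pi.single j 1 : Fin (n+1) → ℕ) t)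
              = ∏ t, x t ^ m.1 t :=
            Finset.prod_congr rfl fun t _ => by
              have h3 := congrFun hs.1 t
              simp only [Pi.add_apply] at h3
              rw [h3]
          rw [uxw_prod_add, uxw_prod_single, pow_one] at h2
          exact h2
        have hPM'ne : (∏ t, x t ^ M'.1 t) ≠ 0 := fun h0 => hPm (by rw [← hPM', h0, zero_mul])
        have hcr := cross (∑ t, ((M'.1 t - M0.1 t) + (M0.1 t - M'.1 t))) M' M0
          le_rfl hPM'ne hPM0
        rw [h1, div_mul_eq_mul_div, eq_div_iff hPM0]
        linear_combination x j * hcr + w M0 * hPM'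
    have hpsi0 : ψ i₀ u = 0 := by
      have := congrArg (fun φ => φ 1) (hψrel i₀)
      simpa [← hu] using this
    rw [hψapp] at hpsi0
    have hce : (w M0 / ∏ t, x t ^ M0.1 t) * MvPolynomial.eval x (h i₀) = 0 := by
      rw [uxw_eval_eq x (h i₀) (hhom i₀), Finset.mul_sum, ← hpsi0]
      refine Finset.sum_congr rfl fun m _ => ?_
      rw [hum m]
      ring
    have hc0 : w M0 / ∏ t, x t ^ M0.1 t = 0 :=
      (mul_eq_zero.mp hce).resolve_right hi₀
    have hu0 : ∀ m, u m = 0 := fun m => by rw [hum m, hc0, zero_mul]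
    have hu00 : u = 0 := funext hu0
    have hw0 : ∀ m', w m' = 0 := by
      intro m'
      have h1 := hrel j₀ m'
      rw [hu0 _] at h1
      exact (mul_eq_zero.mp h1.symm).resolve_left hj₀
    constructor
    · refine LinearMap.ext fun a => ?_
      have h2 : φ₂ a = a • u := by
        rw [hu, ← map_smul, smul_eq_mul, mul_one]
      rw [h2, hu00, smul_zero, LinearMap.zero_apply]
    · refine LinearMap.ext fun a => ?_
      have h2 : φ₃ a = a • w := by
        rw [hw, ← map_smul, smul_eq_mul, mul_one]
      rw [h2, show w = 0 from funext hw0, smul_zero, LinearMap.zero_apply]
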